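/- Suppose the link g is the identity, the covariates are independent, each X̃_j contains 1 as its first entry, and no entry of X̃_j equals any X_{r+k} for k ≠ j. If E(Y | X) = ∑_{k} X̃_kᵀ f_k(X_{r+k}), then E(Y | X̃_j, X_{r+j}) = X̃_jᵀ (f_j(X_{r+j}) + c_j) for some constant vector c_j, and consequently f_j + c_j minimizes η_j ↦ E[Y − X̃_jᵀ η_j(X_{r+j})]² over all measurable vector-valued functions η_j with E|X̃_jᵀη_j(X_{r+j})|² < ∞. -/

import Mathlib

/-!
Conditioning on `(X̃_j, X_{r+j})` through `σ(X)` leaves `X̃_jᵀ f_j(X_{r+j})` plus the conditional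
expectation of the other components. Each of these is a function of `X̃_j` (through shared
covariates, and affinely so) and of the covariates outside `(X̃_j, X_{r+j})`, which are independent
of the conditioning variables. Integrating the latter out with `X̃_j` frozen therefore gives an
affine function `X̃_jᵀ c + γ` of `X̃_j`, and `γ` is absorbed into `c` because the first entry of
`X̃_j` is `1`. Only the sums `X̃_kᵀ f_k(X_{r+k})` are known to be integrable, not their single
terms, so the affine function is recovered from its values on the set of points where the frozen
integrand is integrable, a set closed under affine combinations. The minimisation is then the
`L²`-projection property of conditional expectation.
-/

open MeasureTheory ProbabilityTheory AffineMap

theorem exists_linearMap_add_const_eqOn_of_lineMap {K V : Type*} [Field K] [NeZero (2 : K)]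
    [AddCommGroup V] [Module K V] {S : Set V} {h : V → K} (hS : S.Nonempty)
    (hcl : ∀ a ∈ S, ∀ b ∈ S, ∀ t : K, lineMap a b t ∈ S)
    (hh : ∀ a ∈ S, ∀ b ∈ S, ∀ t : K, h (lineMap a b t) = lineMap (h a) (h b) t) :
    ∃ (L : V →ₗ[K] K) (γ : K), ∀ a ∈ S, h a = L a + γ := by
  obtain ⟨p, hp⟩ := hS
  have smul_eq (t : K) (w : V) : t • w + p = lineMap p (w + p) t := by
    simp [lineMap_apply_module']
  -- `w₁ + w₂ + p` is obtained by reflecting `p` through the midpoint of `w₁ + p` and `w₂ + p`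
  have add_eq (w₁ w₂ : V) :
      w₁ + w₂ + p = lineMap p (lineMap (w₁ + p) (w₂ + p) (2⁻¹ : K)) (2 : K) := by
    simp only [lineMap_apply_module', smul_add, smul_sub, smul_smul,
      mul_inv_cancel₀ (two_ne_zero : (2 : K) ≠ 0)]
    module
  let D : Submodule K V :=
    { carrier := {w | w + p ∈ S}
      add_mem' := fun {w₁ w₂} h₁ h₂ => by
        show w₁ + w₂ + p ∈ S
        rw [add_eq]
        exact hcl _ hp _ (hcl _ h₁ _ h₂ _) _
      zero_mem' := by simpa using hp
      smul_mem' := fun t w hw => by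
        show t • w + p ∈ S
        rw [smul_eq]
        exact hcl _ hp _ hw t }
  let ℓ : D →ₗ[K] K :=
    { toFun := fun w => h (w + p) - h p
      map_add' := fun w₁ w₂ => by
        simp only [Submodule.coe_add, add_eq, hh _ hp _ (hcl _ w₁.2 _ w₂.2 _),
          hh _ w₁.2 _ w₂.2, lineMap_apply_ring']
        field_simp
        ring
      map_smul' := fun t w => by
        simp only [SetLike.val_smul, smul_eq, hh _ hp _ w.2, lineMap_apply_ring', smul_eq_mul,
          RingHom.id_apply]
        ring }
  obtain ⟨L, hL⟩ := LinearMap.exists_extend ℓ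
  refine ⟨L, h p - L p, fun a ha => ?_⟩
  have hmem : a - p ∈ D := by simpa [D] using ha
  have := LinearMap.congr_fun hL ⟨a - p, hmem⟩
  simp only [LinearMap.coe_comp, Function.comp_apply, Submodule.coe_subtype, map_sub,
    LinearMap.coe_mk, AddHom.coe_mk, sub_add_cancel, ℓ] at this
  linear_combination -this

theorem LinearMap.exists_sum_mul_eq_add_const {R κ : Type*} [CommRing R] [Fintype κ]
    [DecidableEq κ] (L : (κ → R) →ₗ[R] R) (γ : R) (i₀ : κ) :
    ∃ c : κ → R, ∀ a : κ → R, a i₀ = 1 → L a + γ = ∑ i, a i * c i := by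
  refine ⟨fun i => L (fun j => if i = j then 1 else 0) + if i = i₀ then γ else 0,
    fun a ha => ?_⟩
  simp only [mul_add, Finset.sum_add_distrib, mul_ite, mul_zero, Finset.sum_ite_eq',
    Finset.mem_univ, if_true, ha, one_mul, L.pi_apply_eq_sum_univ a, smul_eq_mul]

theorem integral_mul_condExp_of_stronglyMeasurable {Ω : Type*} {m m₀ : MeasurableSpace Ω}
    {μ : Measure Ω} [IsFiniteMeasure μ] (hm : m ≤ m₀) {f g : Ω → ℝ}
    (hf : StronglyMeasurable[m] f) (hfg : Integrable (f * g) μ) (hg : Integrable g μ) :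
    ∫ ω, f ω * μ[g | m] ω ∂μ = ∫ ω, f ω * g ω ∂μ :=
  calc ∫ ω, f ω * μ[g | m] ω ∂μ = ∫ ω, μ[f * g | m] ω ∂μ :=
        integral_congr_ae (condExp_mul_of_stronglyMeasurable_left hf hfg hg).symm
    _ = ∫ ω, f ω * g ω ∂μ := integral_condExp hm

theorem integral_sq_sub_condExp_le {Ω : Type*} {m m₀ : MeasurableSpace Ω}
    {μ : Measure Ω} [IsFiniteMeasure μ] (hm : m ≤ m₀) {Y g : Ω → ℝ} (hY : MemLp Y 2 μ)
    (hg : StronglyMeasurable[m] g) (hg2 : MemLp g 2 μ) :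
    ∫ ω, (Y ω - μ[Y | m] ω) ^ 2 ∂μ ≤ ∫ ω, (Y ω - g ω) ^ 2 ∂μ := by
  set C := μ[Y | m]
  have hC : MemLp C 2 μ := hY.condExp one_le_two
  have hD : MemLp (C - g) 2 μ := hC.sub hg2
  have hE : MemLp (Y - C) 2 μ := hY.sub hC
  have hDY : Integrable (fun ω => (C ω - g ω) * Y ω) μ := hD.integrable_mul hY
  have hDC : Integrable (fun ω => (C ω - g ω) * C ω) μ := hD.integrable_mul hC
  have hDE : Integrable (fun ω => 2 * ((C ω - g ω) * (Y ω - C ω))) μ :=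
    (hD.integrable_mul hE).const_mul 2
  have hcross : ∫ ω, (C ω - g ω) * (Y ω - C ω) ∂μ = 0 := by
    simp only [mul_sub]
    rw [integral_sub hDY hDC, ← integral_mul_condExp_of_stronglyMeasurable hm
      (f := fun ω => C ω - g ω) (stronglyMeasurable_condExp.sub hg) hDY
      (hY.integrable one_le_two), sub_self]
  have hexpand : ∫ ω, (Y ω - g ω) ^ 2 ∂μ
      = ∫ ω, (Y ω - C ω) ^ 2 ∂μ + 2 * ∫ ω, (C ω - g ω) * (Y ω - C ω) ∂μ
        + ∫ ω, (C ω - g ω) ^ 2 ∂μ := by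
    have hEsq : Integrable (fun ω => (Y ω - C ω) ^ 2) μ := hE.integrable_sq
    have hDsq : Integrable (fun ω => (C ω - g ω) ^ 2) μ := hD.integrable_sq
    rw [← integral_const_mul, ← integral_add hEsq hDE, ←
      integral_add (f := fun ω => (Y ω - C ω) ^ 2 + 2 * ((C ω - g ω) * (Y ω - C ω)))
        (hEsq.add hDE) hDsq]
    congr with ω
    ring
  have hnonneg : 0 ≤ ∫ ω, (C ω - g ω) ^ 2 ∂μ := integral_nonneg fun ω => sq_nonneg _
  rw [hexpand, hcross]
  linarith

namespace ProbabilityTheory.IndepFun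

theorem condExp_comp_prodMk_ae_eq_integral {Ω E F G : Type*} [MeasurableSpace Ω]
    [MeasurableSpace E] [MeasurableSpace F] [NormedAddCommGroup G] [NormedSpace ℝ G]
    [CompleteSpace G] {μ : Measure Ω} [IsFiniteMeasure μ] {W : Ω → E} {B : Ω → F}
    (hW : Measurable W) (hB : Measurable B) (hind : IndepFun W B μ)
    {Θ : E × F → G} (hΘ : StronglyMeasurable Θ) (hint : Integrable (fun ω => Θ (W ω, B ω)) μ) :
    (∀ᵐ ω ∂μ, Integrable (fun b => Θ (W ω, b)) (μ.map B)) ∧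
      μ[fun ω => Θ (W ω, B ω) | MeasurableSpace.comap W inferInstance] =ᵐ[μ]
        fun ω => ∫ b, Θ (W ω, b) ∂(μ.map B) := by
  have hWB : Measurable fun ω => (W ω, B ω) := hW.prodMk hB
  have hlaw : μ.map (fun ω => (W ω, B ω)) = (μ.map W).prod (μ.map B) :=
    (indepFun_iff_map_prod_eq_prod_map_map hW.aemeasurable hB.aemeasurable).mp hind
  have hΘint : Integrable Θ ((μ.map W).prod (μ.map B)) := by
    rw [← hlaw]
    exact (integrable_map_measure hΘ.aestronglyMeasurable hWB.aemeasurable).mpr hint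
  have hfrozen : StronglyMeasurable fun w => ∫ b, Θ (w, b) ∂(μ.map B) :=
    hΘ.integral_prod_right'
  refine ⟨ae_of_ae_map hW.aemeasurable hΘint.prod_right_ae, ?_⟩
  refine (ae_eq_condExp_of_forall_setIntegral_eq hW.comap_le hint (fun s _ _ => ?_)
    ?_ ?_).symm
  · exact ((integrable_map_measure hfrozen.aestronglyMeasurable hW.aemeasurable).mp
      hΘint.integral_prod_left).integrableOn
  · rintro _ ⟨t, ht, rfl⟩ _
    have hpre : (fun ω => (W ω, B ω)) ⁻¹' (t ×ˢ Set.univ) = W ⁻¹' t := by ext; simp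
    rw [← setIntegral_map ht hfrozen.aestronglyMeasurable hW.aemeasurable, ← hpre,
      ← setIntegral_map (ht.prod MeasurableSet.univ) hΘ.aestronglyMeasurable hWB.aemeasurable,
      hlaw, setIntegral_prod _ hΘint.integrableOn, Measure.restrict_univ]
  · exact (hfrozen.comp_measurable (comap_measurable W)).aestronglyMeasurable

theorem exists_condExp_ae_eq_linearMap_add_const {Ω E F G : Type*} [MeasurableSpace Ω]
    [AddCommGroup E] [Module ℝ E] [MeasurableSpace E] [MeasurableSpace F] [MeasurableSpace G]
    {μ : Measure Ω} [IsProbabilityMeasure μ] {P : Ω → E} {Q : Ω → F} {B : Ω → G}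
    (hP : Measurable P) (hQ : Measurable Q) (hB : Measurable B)
    (hind : IndepFun (fun ω => (P ω, Q ω)) B μ) {Θ : E → G → ℝ}
    (hΘ : Measurable (Function.uncurry Θ))
    (hΘaff : ∀ b a a' (t : ℝ), Θ (lineMap a a' t) b = lineMap (Θ a b) (Θ a' b) t)
    (hint : Integrable (fun ω => Θ (P ω) (B ω)) μ) :
    ∃ (L : E →ₗ[ℝ] ℝ) (γ : ℝ),
      μ[fun ω => Θ (P ω) (B ω) | MeasurableSpace.comap (fun ω => (P ω, Q ω)) inferInstance]
        =ᵐ[μ] fun ω => L (P ω) + γ := by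
  have hΘ' : StronglyMeasurable fun q : (E × F) × G => Θ q.1.1 q.2 :=
    (hΘ.comp (measurable_fst.fst.prodMk measurable_snd)).stronglyMeasurable
  obtain ⟨hfiber, hfrozen⟩ :=
    condExp_comp_prodMk_ae_eq_integral (hP.prodMk hQ) hB hind hΘ' hint
  set ν := μ.map B
  let S := {a : E | Integrable (Θ a) ν}
  have hlin (a a' : E) (t : ℝ) :
      Θ (lineMap a a' t) = fun b => (1 - t) * Θ a b + t * Θ a' b := by
    ext b; rw [hΘaff, lineMap_apply_ring]
  have hS : S.Nonempty := by
    obtain ⟨ω, hω⟩ := hfiber.exists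
    exact ⟨P ω, hω⟩
  have hSaff : ∀ a ∈ S, ∀ a' ∈ S, ∀ t : ℝ, lineMap a a' t ∈ S := by
    intro a ha a' ha' t
    show Integrable (Θ _) ν
    rw [hlin]
    exact (ha.const_mul _).add (ha'.const_mul _)
  have hintegral_aff : ∀ a ∈ S, ∀ a' ∈ S, ∀ t : ℝ, ∫ b, Θ (lineMap a a' t) b ∂ν =
      lineMap (∫ b, Θ a b ∂ν) (∫ b, Θ a' b ∂ν) t := by
    intro a ha a' ha' t
    simp only [hlin, lineMap_apply_ring]
    rw [integral_add (ha.const_mul _) (ha'.const_mul _), integral_const_mul, integral_const_mul]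
  obtain ⟨L, γ, hLγ⟩ :=
    exists_linearMap_add_const_eqOn_of_lineMap (h := fun a => ∫ b, Θ a b ∂ν) hS hSaff hintegral_aff
  refine ⟨L, γ, hfrozen.trans ?_⟩
  filter_upwards [hfiber] with ω hω using hLγ _ hω

end ProbabilityTheory.IndepFun

section FillIn

variable {ι κ : Type*} [DecidableEq ι]

-- Reassembles the covariates of the other components from `X̃_j = a` and the independent block `b`.
noncomputable def fillIn (s : Finset ι) (e : κ → ι) (a : κ → ℝ) (b : s → ℝ) : ι → ℝ :=
  fun l => if h : l ∈ s then b ⟨l, h⟩ else Function.extend e a 0 l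

variable {s : Finset ι} {e : κ → ι}

theorem fillIn_of_mem (a : κ → ℝ) (b : s → ℝ) {l : ι} (hl : l ∈ s) :
    fillIn s e a b l = b ⟨l, hl⟩ :=
  dif_pos hl

theorem fillIn_comp_apply (x : ι → ℝ) {l : ι} (hl : l ∈ s ∨ l ∈ Set.range e) :
    fillIn s e (x ∘ e) (fun l => x l) l = x l := by
  by_cases hs : l ∈ s
  · exact fillIn_of_mem _ _ hs
  · obtain ⟨i, rfl⟩ := hl.resolve_left hs
    rw [fillIn, dif_neg hs]
    exact Function.FactorsThrough.extend_apply (fun _ _ h => congrArg x h) (0 : ι → ℝ) i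

theorem fillIn_lineMap (a a' : κ → ℝ) (b : s → ℝ) (t : ℝ) :
    fillIn s e (lineMap a a' t) b = lineMap (fillIn s e a b) (fillIn s e a' b) t := by
  classical
  ext l
  simp only [fillIn, pi_lineMap_apply, Function.extend_def]
  split_ifs <;> simp

theorem measurable_fillIn :
    Measurable fun q : (κ → ℝ) × (s → ℝ) => fillIn s e q.1 q.2 := by
  classical
  refine measurable_pi_lambda _ fun l => ?_
  simp only [fillIn, Function.extend_def]
  split_ifs
  · exact (measurable_pi_apply _).comp measurable_snd
  · exact (measurable_pi_apply _).comp measurable_fst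
  · exact measurable_const

end FillIn

section VaryingCoefficient

variable {ι κ : Type*} [Fintype κ] (sel : κ → ι) (crd : ι) (g : ℝ → κ → ℝ)

-- The component `X̃ᵀ g(X_c)` at the covariate vector `x`, where `X̃ = x ∘ sel` and `X_c = x crd`.
def vcComponent (x : ι → ℝ) : ℝ :=
  ∑ i, x (sel i) * g (x crd) i

variable {sel crd g}

theorem vcComponent_congr {x y : ι → ℝ} (hsel : ∀ i, x (sel i) = y (sel i))
    (hcrd : x crd = y crd) : vcComponent sel crd g x = vcComponent sel crd g y := by
  simp only [vcComponent, hsel, hcrd]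

theorem vcComponent_lineMap {x y : ι → ℝ} (hcrd : x crd = y crd) (t : ℝ) :
    vcComponent sel crd g (lineMap x y t)
      = lineMap (vcComponent sel crd g x) (vcComponent sel crd g y) t := by
  simp only [vcComponent, pi_lineMap_apply, ← hcrd, lineMap_same_apply, lineMap_apply_ring,
    Finset.mul_sum, ← Finset.sum_add_distrib]
  congr with i
  ring

theorem measurable_vcComponent (hg : Measurable g) : Measurable (vcComponent sel crd g) :=
  Finset.measurable_sum _ fun i _ =>
    (measurable_pi_apply _).mul ((measurable_pi_apply i).comp (hg.comp (measurable_pi_apply _)))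

end VaryingCoefficient

theorem condExp_sum_ae_eq_add_condExp_sum_erase {Ω κ : Type*} [DecidableEq κ] [Fintype κ]
    {m m₀ : MeasurableSpace Ω} {μ : Measure Ω} [IsFiniteMeasure μ] (hm : m ≤ m₀) {S : κ → Ω → ℝ}
    (hS : ∀ k, Integrable (S k) μ) {j : κ} (hSj : StronglyMeasurable[m] (S j)) :
    μ[fun ω => ∑ k, S k ω | m] =ᵐ[μ]
      fun ω => S j ω + μ[fun ω => ∑ k ∈ Finset.univ.erase j, S k ω | m] ω := by
  have hsplit : (fun ω => ∑ k, S k ω) = S j + fun ω => ∑ k ∈ Finset.univ.erase j, S k ω := by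
    ext ω
    exact (Finset.add_sum_erase _ _ (Finset.mem_univ j)).symm
  rw [hsplit]
  refine (condExp_add (hS j) (integrable_finsetSum _ fun k _ => hS k) m).trans ?_
  rw [condExp_of_stronglyMeasurable hm hSj (hS j)]
  rfl

theorem exists_condExp_sum_erase_vcComponent_ae_eq {Ω ι : Type*} [MeasurableSpace Ω]
    {μ : Measure Ω} [IsProbabilityMeasure μ] {Z : ι → Ω → ℝ} (hZ : ∀ i, Measurable (Z i))
    (hindep : iIndepFun Z μ) {p : ℕ} {dv : Fin p → ℕ} {sel : (k : Fin p) → Fin (dv k) → ι}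
    {crd : Fin p → ι} (hcrd : Function.Injective crd)
    (hsel : ∀ j i k, k ≠ j → sel j i ≠ crd k) {f : (k : Fin p) → ℝ → Fin (dv k) → ℝ}
    (hf : ∀ k, Measurable (f k)) (j : Fin p)
    (hint : Integrable (fun ω =>
      ∑ k ∈ Finset.univ.erase j, vcComponent (sel k) (crd k) (f k) (fun l => Z l ω)) μ) :
    ∃ (L : (Fin (dv j) → ℝ) →ₗ[ℝ] ℝ) (γ : ℝ),
      μ[fun ω => ∑ k ∈ Finset.univ.erase j, vcComponent (sel k) (crd k) (f k) (fun l => Z l ω) |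
        MeasurableSpace.comap (fun ω => ((fun i => Z (sel j i) ω), Z (crd j) ω)) inferInstance]
        =ᵐ[μ] fun ω => L (fun i => Z (sel j i) ω) + γ := by
  classical
  set SJ : Finset ι := insert (crd j) (Finset.univ.image (sel j))
  -- covariates of the other components outside `(X̃_j, X_{r+j})`, hence independent of it
  set T : Finset ι :=
    (Finset.univ.biUnion fun k => insert (crd k) (Finset.univ.image (sel k))) \ SJ
  have hmemT {k : Fin p} {l : ι} (hl : l ∈ insert (crd k) (Finset.univ.image (sel k)))
      (hlSJ : l ∉ SJ) : l ∈ T :=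
    Finset.mem_sdiff.mpr ⟨Finset.mem_biUnion.mpr ⟨k, Finset.mem_univ k, hl⟩, hlSJ⟩
  have hcrdT : ∀ k ∈ Finset.univ.erase j, crd k ∈ T := fun k hk =>
    hmemT (Finset.mem_insert_self _ _) (by
      simp only [SJ, Finset.mem_insert, Finset.mem_image, Finset.mem_univ, true_and, not_or,
        not_exists]
      exact ⟨fun h => Finset.ne_of_mem_erase hk (hcrd h), fun i => hsel j i k
        (Finset.ne_of_mem_erase hk)⟩)
  have hselT : ∀ k ∈ Finset.univ.erase j, ∀ i, sel k i ∈ T ∨ sel k i ∈ Set.range (sel j) := by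
    intro k hk i
    by_cases hi : sel k i ∈ Set.range (sel j)
    · exact Or.inr hi
    refine Or.inl (hmemT (Finset.mem_insert_of_mem (Finset.mem_image_of_mem _
      (Finset.mem_univ i))) ?_)
    simp only [SJ, Finset.mem_insert, Finset.mem_image, Finset.mem_univ, true_and, not_or]
    exact ⟨hsel k i j (Finset.ne_of_mem_erase hk).symm, hi⟩
  set Θ : (Fin (dv j) → ℝ) → (T → ℝ) → ℝ := fun a b =>
    ∑ k ∈ Finset.univ.erase j, vcComponent (sel k) (crd k) (f k) (fillIn T (sel j) a b)
  have hΘ : (fun ω => Θ (fun i => Z (sel j i) ω) (fun l => Z l ω)) = fun ω =>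
      ∑ k ∈ Finset.univ.erase j, vcComponent (sel k) (crd k) (f k) (fun l => Z l ω) := by
    ext ω
    refine Finset.sum_congr rfl fun k hk => vcComponent_congr
      (fun i => fillIn_comp_apply (fun l => Z l ω) (hselT k hk i))
      (fillIn_comp_apply (fun l => Z l ω) (Or.inl (hcrdT k hk)))
  have hΘaff : ∀ b a a' (t : ℝ), Θ (lineMap a a' t) b = lineMap (Θ a b) (Θ a' b) t := by
    intro b a a' t
    simp only [Θ, fillIn_lineMap]
    rw [Finset.sum_congr rfl fun k hk => vcComponent_lineMap
      (by rw [fillIn_of_mem _ _ (hcrdT k hk), fillIn_of_mem _ _ (hcrdT k hk)]) t]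
    simp only [lineMap_apply_ring, Finset.mul_sum, Finset.sum_add_distrib]
  have hind : IndepFun (fun ω => ((fun i => Z (sel j i) ω), Z (crd j) ω))
      (fun ω (l : T) => Z l ω) μ :=
    (hindep.indepFun_finset SJ T Finset.disjoint_sdiff hZ).comp
      (φ := fun x => ((fun i => x ⟨sel j i, by simp [SJ]⟩), x ⟨crd j, by simp [SJ]⟩))
      ((measurable_pi_lambda _ fun i => measurable_pi_apply _).prodMk (measurable_pi_apply _))
      measurable_id
  rw [← hΘ] at hint ⊢
  exact hind.exists_condExp_ae_eq_linearMap_add_const (measurable_pi_lambda _ fun i => hZ _)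
    (hZ _) (measurable_pi_lambda _ fun l => hZ _)
    (Finset.measurable_sum _ fun k _ => (measurable_vcComponent (hf k)).comp measurable_fillIn)
    hΘaff hint

theorem comap_prodMk_le_comap_pi {Ω ι κ β : Type*} [MeasurableSpace β] (Z : ι → Ω → β)
    (s : κ → ι) (c : ι) :
    MeasurableSpace.comap (fun ω => ((fun i => Z (s i) ω), Z c ω)) inferInstance ≤
      MeasurableSpace.comap (fun ω i => Z i ω) MeasurableSpace.pi := by
  rw [show (fun ω => ((fun i => Z (s i) ω), Z c ω)) =
      (fun x => ((fun i => x (s i)), x c)) ∘ fun ω i => Z i ω from rfl,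
    ← MeasurableSpace.comap_comp]
  exact MeasurableSpace.comap_mono <| Measurable.comap_le <|
    (measurable_pi_lambda _ fun i => measurable_pi_apply _).prodMk (measurable_pi_apply _)

theorem stronglyMeasurable_comap_prodMk_sum_mul {Ω κ : Type*} [Fintype κ] {P : Ω → κ → ℝ}
    {Q : Ω → ℝ} {g : ℝ → κ → ℝ} (hg : Measurable g) :
    StronglyMeasurable[MeasurableSpace.comap (fun ω => (P ω, Q ω)) inferInstance]
      fun ω => ∑ i, P ω i * g (Q ω) i :=
  ((Finset.measurable_sum _ fun i _ => ((measurable_pi_apply i).comp measurable_fst).mul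
    ((measurable_pi_apply i).comp (hg.comp measurable_snd))).comp
      (comap_measurable _)).stronglyMeasurable

theorem stmt19_general {Ω : Type*} [MeasurableSpace Ω] (μ : Measure Ω) [IsProbabilityMeasure μ]
    {ι : Type*} (Z : ι → Ω → ℝ) (hZmeas : ∀ i, Measurable (Z i))
    (hindep : iIndepFun Z μ)
    {p : ℕ} (dv : Fin p → ℕ) (hdv : ∀ k, 0 < dv k)
    (sel : (k : Fin p) → Fin (dv k) → ι) (crd : Fin p → ι)
    (hcrdinj : Function.Injective crd)
    (hnotother : ∀ j i k, k ≠ j → sel j i ≠ crd k)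
    (hone : ∀ k ω, Z (sel k ⟨0, hdv k⟩) ω = 1)
    (Y : Ω → ℝ) (hY : MemLp Y 2 μ)
    (f : (k : Fin p) → ℝ → Fin (dv k) → ℝ)
    (hfmeas : ∀ k, Measurable (f k))
    (hfL2 : ∀ k, MemLp (fun ω => ∑ i, Z (sel k i) ω * f k (Z (crd k) ω) i) 2 μ)
    (hmodel :
      μ[Y | MeasurableSpace.comap (fun ω (i : ι) => Z i ω) MeasurableSpace.pi] =ᵐ[μ]
        fun ω => ∑ k, ∑ i, Z (sel k i) ω * f k (Z (crd k) ω) i) :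
    ∀ j : Fin p, ∃ cj : Fin (dv j) → ℝ,
      (μ[Y | MeasurableSpace.comap
          (fun ω => ((fun i : Fin (dv j) => Z (sel j i) ω), Z (crd j) ω))
          inferInstance] =ᵐ[μ]
        fun ω => ∑ i, Z (sel j i) ω * (f j (Z (crd j) ω) i + cj i)) ∧
      ∀ η : ℝ → Fin (dv j) → ℝ, Measurable η →
        MemLp (fun ω => ∑ i, Z (sel j i) ω * η (Z (crd j) ω) i) 2 μ →
        ∫ ω, (Y ω - ∑ i, Z (sel j i) ω * (f j (Z (crd j) ω) i + cj i)) ^ 2 ∂μ ≤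
          ∫ ω, (Y ω - ∑ i, Z (sel j i) ω * η (Z (crd j) ω) i) ^ 2 ∂μ := by
  intro j
  set W := fun ω => ((fun i : Fin (dv j) => Z (sel j i) ω), Z (crd j) ω)
  have hW : Measurable W := (measurable_pi_lambda _ fun i => hZmeas _).prodMk (hZmeas _)
  have hint k : Integrable (fun ω => vcComponent (sel k) (crd k) (f k) (fun l => Z l ω)) μ :=
    (hfL2 k).integrable one_le_two
  obtain ⟨L, γ, hrest⟩ := exists_condExp_sum_erase_vcComponent_ae_eq hZmeas hindep hcrdinj
    hnotother hfmeas j (integrable_finsetSum _ fun k _ => hint k)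
  obtain ⟨c, hc⟩ := L.exists_sum_mul_eq_add_const γ ⟨0, hdv j⟩
  have hcond : μ[Y | MeasurableSpace.comap W inferInstance] =ᵐ[μ]
      fun ω => ∑ i, Z (sel j i) ω * (f j (Z (crd j) ω) i + c i) :=
    calc μ[Y | MeasurableSpace.comap W inferInstance]
        =ᵐ[μ] μ[μ[Y | MeasurableSpace.comap (fun ω (i : ι) => Z i ω) MeasurableSpace.pi] |
          MeasurableSpace.comap W inferInstance] :=
          (condExp_condExp_of_le (comap_prodMk_le_comap_pi Z (sel j) (crd j))
            (measurable_pi_lambda _ hZmeas).comap_le).symm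
      _ =ᵐ[μ] μ[fun ω => ∑ k, vcComponent (sel k) (crd k) (f k) (fun l => Z l ω) |
          MeasurableSpace.comap W inferInstance] := condExp_congr_ae hmodel
      _ =ᵐ[μ] _ := condExp_sum_ae_eq_add_condExp_sum_erase hW.comap_le hint
          (stronglyMeasurable_comap_prodMk_sum_mul (hfmeas j))
      _ =ᵐ[μ] _ := by
        filter_upwards [hrest] with ω hω
        rw [hω, hc _ (hone j ω)]
        simp only [vcComponent, mul_add, Finset.sum_add_distrib]
  refine ⟨c, hcond, fun η hη hη2 => ?_⟩
  calc ∫ ω, (Y ω - ∑ i, Z (sel j i) ω * (f j (Z (crd j) ω) i + c i)) ^ 2 ∂μ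
      = ∫ ω, (Y ω - μ[Y | MeasurableSpace.comap W inferInstance] ω) ^ 2 ∂μ :=
        integral_congr_ae (hcond.mono fun ω hω => by simp only [hω])
    _ ≤ _ := integral_sq_sub_condExp_le hW.comap_le hY
        (stronglyMeasurable_comap_prodMk_sum_mul hη) hη2

/-- Remark 1: with identity link, independent covariates `Z i`, each `X̃_j` having `1` as
its first entry and no entry of `X̃_j` equal to any `X_{r+k}` for `k ≠ j` (nor to
`X_{r+j}` itself), if `E(Y | X) = ∑_k X̃_kᵀ f_k(X_{r+k})`, then
`E(Y | X̃_j, X_{r+j}) = X̃_jᵀ (f_j(X_{r+j}) + c_j)` for some constant vector `c_j`, and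
consequently `f_j + c_j` minimizes `η ↦ E[Y − X̃_jᵀ η(X_{r+j})]²` over all measurable
square-integrable `η`. -/
theorem stmt19 {Ω : Type*} [MeasurableSpace Ω] (μ : Measure Ω) [IsProbabilityMeasure μ]
    {ι : Type*} (Z : ι → Ω → ℝ) (hZmeas : ∀ i, Measurable (Z i))
    (hindep : iIndepFun Z μ)
    {p : ℕ} (dv : Fin p → ℕ) (hdv : ∀ k, 0 < dv k)
    (sel : (k : Fin p) → Fin (dv k) → ι) (crd : Fin p → ι)
    (hcrdinj : Function.Injective crd)
    (hnotself : ∀ k i, sel k i ≠ crd k)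
    (hnotother : ∀ j i k, k ≠ j → sel j i ≠ crd k)
    (hone : ∀ k ω, Z (sel k ⟨0, hdv k⟩) ω = 1)
    (Y : Ω → ℝ) (hY : MemLp Y 2 μ)
    (f : (k : Fin p) → ℝ → Fin (dv k) → ℝ)
    (hfmeas : ∀ k, Measurable (f k))
    (hfL2 : ∀ k, MemLp (fun ω => ∑ i, Z (sel k i) ω * f k (Z (crd k) ω) i) 2 μ)
    (hmodel :
      μ[Y | MeasurableSpace.comap (fun ω (i : ι) => Z i ω) MeasurableSpace.pi] =ᵐ[μ]
        fun ω => ∑ k, ∑ i, Z (sel k i) ω * f k (Z (crd k) ω) i) :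
    ∀ j : Fin p, ∃ cj : Fin (dv j) → ℝ,
      (μ[Y | MeasurableSpace.comap
          (fun ω => ((fun i : Fin (dv j) => Z (sel j i) ω), Z (crd j) ω))
          inferInstance] =ᵐ[μ]
        fun ω => ∑ i, Z (sel j i) ω * (f j (Z (crd j) ω) i + cj i)) ∧
      ∀ η : ℝ → Fin (dv j) → ℝ, Measurable η →
        MemLp (fun ω => ∑ i, Z (sel j i) ω * η (Z (crd j) ω) i) 2 μ →
        ∫ ω, (Y ω - ∑ i, Z (sel j i) ω * (f j (Z (crd j) ω) i + cj i)) ^ 2 ∂μ ≤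
          ∫ ω, (Y ω - ∑ i, Z (sel j i) ω * η (Z (crd j) ω) i) ^ 2 ∂μ :=
  stmt19_general μ Z hZmeas hindep dv hdv sel crd hcrdinj hnotother hone Y hY f hfmeas hfL2 hmodel
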